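/- arXiv:2503.21154 — 2 statements merged into one kernel-verified Lean document; each statement's English description precedes it below -/
import Mathlib

section
/- Let independent Gaussian noise with standard deviation sigma/W(H) be added to each Haar wavelet coefficient H of the transform of a vector with m = 2^n elements, where W(H_0) = m for the base coefficient and W(H) = 2^{level(H)} for a detail coefficient at level l. Then each reconstructed entry of the inverse wavelet transform has noise variance at most ((2 + log2(m))/2) * sigma^2. -/
/-!
Independence makes every cross covariance vanish, so the reconstruction noise has variance
`Var e₀ + ∑ s_l² Var e_l = σ² / 4ⁿ + ∑_{l < n} σ² / 4^(l+1)`. The base term is at most `σ²` and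
each of the `n` detail terms at most `σ² / 2`.
-/

open MeasureTheory ProbabilityTheory

namespace ProbabilityTheory

variable {Ω ι : Type*} {mΩ : MeasurableSpace Ω} {μ : Measure Ω}
  {X₀ : Ω → ℝ} {X : ι → Ω → ℝ} {t : Finset ι}

theorem IndepFun.variance_sum_const_mul (c : ι → ℝ) (hX : ∀ i ∈ t, MemLp (X i) 2 μ)
    (h : Set.Pairwise ↑t fun i j => X i ⟂ᵢ[μ] X j) :
    Var[fun ω ↦ ∑ i ∈ t, c i * X i ω; μ] = ∑ i ∈ t, c i ^ 2 * Var[X i; μ] := by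
  have hcX : ∀ i ∈ t, MemLp (fun ω ↦ c i * X i ω) 2 μ := fun i hi ↦ (hX i hi).const_mul (c i)
  have hindep : Set.Pairwise ↑t fun i j => (fun ω ↦ c i * X i ω) ⟂ᵢ[μ] fun ω ↦ c j * X j ω :=
    fun i hi j hj hij ↦
      (h hi hj hij).comp (measurable_const_mul (c i)) (measurable_const_mul (c j))
  rw [← Finset.sum_fn, IndepFun.variance_sum hcX hindep]
  exact Finset.sum_congr rfl fun i _ ↦ variance_const_mul (c i) (X i) μ

theorem IndepFun.variance_add_sum_const_mul [IsFiniteMeasure μ] (c : ι → ℝ)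
    (hX₀ : MemLp X₀ 2 μ) (hX : ∀ i ∈ t, MemLp (X i) 2 μ) (h₀ : ∀ i ∈ t, X₀ ⟂ᵢ[μ] X i)
    (h : Set.Pairwise ↑t fun i j => X i ⟂ᵢ[μ] X j) :
    Var[fun ω ↦ X₀ ω + ∑ i ∈ t, c i * X i ω; μ]
      = Var[X₀; μ] + ∑ i ∈ t, c i ^ 2 * Var[X i; μ] := by
  have hcX : ∀ i ∈ t, MemLp (fun ω ↦ c i * X i ω) 2 μ := fun i hi ↦ (hX i hi).const_mul (c i)
  have hcov : cov[X₀, fun ω ↦ ∑ i ∈ t, c i * X i ω; μ] = 0 := by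
    rw [covariance_fun_sum_right' hcX hX₀]
    refine Finset.sum_eq_zero fun i hi ↦ ?_
    rw [covariance_const_mul_right, (h₀ i hi).covariance_eq_zero hX₀ (hX i hi), mul_zero]
  -- Qualified: inside `IndepFun.*` the bare name resolves to `IndepFun.variance_fun_add`.
  rw [ProbabilityTheory.variance_fun_add hX₀ (memLp_finsetSum t hcX), hcov, mul_zero, add_zero,
    variance_sum_const_mul c hX h]

end ProbabilityTheory

theorem sq_div_two_pow_le (σ : ℝ) (k : ℕ) : (σ / 2 ^ k) ^ 2 ≤ σ ^ 2 / 2 ^ k := by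
  rw [div_pow, ← pow_mul]
  exact div_le_div_of_nonneg_left (sq_nonneg σ) (by positivity)
    (pow_le_pow_right₀ one_le_two (by omega))

/-- Wavelet noise injection variance bound.  Independent Gaussian noise with
standard deviation `σ / W(H)` is added to each Haar coefficient of the
transform of a vector with `m = 2^n` elements, where `W(H₀) = m` for the base
coefficient and `W(H) = 2^l` for a detail coefficient at level `l`.  The noise
of a reconstructed entry is the base noise plus the signed sum of the noises of
the `n = log2 m` ancestral detail coefficients (with signs `±1`); its variance
is at most `((2 + log2 m) / 2) * σ²`. -/
theorem wavelet_reconstruction_noise_variance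
    {Ω : Type*} [MeasureSpace Ω] [IsProbabilityMeasure (ℙ : Measure Ω)]
    (n : ℕ) (σ : ℝ)
    (e₀ : Ω → ℝ) (e : ℕ → Ω → ℝ)
    (hmem₀ : MemLp e₀ 2 ℙ) (hmem : ∀ l, MemLp (e l) 2 ℙ)
    (hindep₀ : ∀ l, IndepFun e₀ (e l) ℙ)
    (hindep : ∀ l l', l ≠ l' → IndepFun (e l) (e l') ℙ)
    (hvar₀ : variance e₀ ℙ = (σ / (2 ^ n : ℝ)) ^ 2)
    (hvar : ∀ l < n, variance (e l) ℙ = (σ / (2 ^ (l + 1) : ℝ)) ^ 2)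
    (s : ℕ → ℝ) (hs : ∀ l, s l = 1 ∨ s l = -1) :
    variance (fun ω => e₀ ω + ∑ l ∈ Finset.range n, s l * e l ω) ℙ
      ≤ ((2 + (n : ℝ)) / 2) * σ ^ 2 := by
  have hbase : variance e₀ ℙ ≤ σ ^ 2 := hvar₀ ▸
    (sq_div_two_pow_le σ n).trans (div_le_self (sq_nonneg σ) (one_le_pow₀ one_le_two))
  have hdetail : ∀ l ∈ Finset.range n, s l ^ 2 * variance (e l) ℙ ≤ σ ^ 2 / 2 := by
    intro l hl
    rw [sq_eq_one_iff.2 (hs l), one_mul, hvar l (Finset.mem_range.1 hl)]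
    exact (sq_div_two_pow_le σ (l + 1)).trans <|
      div_le_div_of_nonneg_left (sq_nonneg σ) two_pos (le_self_pow₀ one_le_two (by omega))
  calc variance (fun ω => e₀ ω + ∑ l ∈ Finset.range n, s l * e l ω) ℙ
      = variance e₀ ℙ + ∑ l ∈ Finset.range n, s l ^ 2 * variance (e l) ℙ :=
        IndepFun.variance_add_sum_const_mul s hmem₀ (fun l _ ↦ hmem l) (fun l _ ↦ hindep₀ l)
          fun l _ l' _ ↦ hindep l l'
    _ ≤ σ ^ 2 + ∑ _l ∈ Finset.range n, σ ^ 2 / 2 :=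
        add_le_add hbase (Finset.sum_le_sum hdetail)
    _ = ((2 + (n : ℝ)) / 2) * σ ^ 2 := by
        rw [Finset.sum_const, Finset.card_range, nsmul_eq_mul]
        ring
end

section
/- The Gaussian mechanism F(x) = f(x) + N(0, sigma^2 S_f^2 I), where S_f bounds the L2 sensitivity of f (i.e., ||f(D) - f(D')|| <= S_f for all adjacent D, D'), satisfies (epsilon, delta)-differential privacy whenever sigma >= sqrt(2 ln(1.25/delta))/epsilon with epsilon in (0,1). -/
/-!
Two Gaussians `N(μ₁, v)` and `N(μ₂, v)` have an affine log density ratio, so `p₁ ≤ e^ε p₂`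
off a half-line, and `Pr[F(D) ∈ S] ≤ e^ε Pr[F(D') ∈ S] + Pr[F(D) ∈ that half-line]`.
For `v = σ² S_f²` and `|μ₁ - μ₂| ≤ S_f`, standardising shows that this half-line has mass at
most `Pr[Z > εσ - 1/(2σ)]` for a standard normal `Z`; as `σ ≥ εσ ≥ u := √(2 ln(1.25/δ))`
(here `ε < 1` is used), this is at most `Pr[Z > u - 1/(2u)]`. For `δ < 1/2` Mills' inequality
`Pr[Z > t] ≤ φ(t)/t` together with `(u - 1/(2u))² ≥ u² - 1` bounds it by `δ`; for larger `δ`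
the symmetry of `Z` and `φ ≤ φ(0)` suffice.
-/

open ProbabilityTheory MeasureTheory Real Set Filter Topology
open scoped NNReal ENNReal

namespace MeasureTheory.Measure

variable {α : Type*} [MeasurableSpace α]

lemma apply_le_mul_add_of_restrict_compl_le {μ ν : Measure α} {B : Set α} {c : ℝ≥0∞}
    (h : μ.restrict Bᶜ ≤ c • ν) (S : Set α) : μ S ≤ c * ν S + μ B :=
  calc μ S ≤ μ (S ∩ Bᶜ) + μ (S \ Bᶜ) := measure_le_inter_add_sdiff μ S Bᶜ
    _ ≤ μ.restrict Bᶜ S + μ B :=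
        add_le_add (le_restrict_apply Bᶜ S) (measure_mono fun _ hx => not_not.mp hx.2)
    _ ≤ c * ν S + μ B := add_le_add_left (h S) _

lemma restrict_compl_withDensity_le_smul {ν : Measure α} {f g : α → ℝ≥0∞} {c : ℝ≥0∞}
    {B : Set α} (hB : MeasurableSet B) (hg : Measurable g) (h : ∀ x ∉ B, f x ≤ c * g x) :
    (ν.withDensity f).restrict Bᶜ ≤ c • ν.withDensity g :=
  calc (ν.withDensity f).restrict Bᶜ = (ν.restrict Bᶜ).withDensity f :=
        restrict_withDensity hB.compl f
    _ ≤ (ν.restrict Bᶜ).withDensity (c • g) :=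
        withDensity_mono ((ae_restrict_iff' hB.compl).mpr (ae_of_all _ h))
    _ = c • (ν.withDensity g).restrict Bᶜ := by
        rw [withDensity_smul c hg, restrict_withDensity hB.compl]
    _ ≤ c • ν.withDensity g := by gcongr; exact restrict_le_self

end MeasureTheory.Measure

lemma Real.exp_one_div_two_le : exp (1 / 2) ≤ 1.65 := by
  have h : exp (1 / 2) * exp (1 / 2) = exp 1 := by rw [← exp_add]; norm_num
  nlinarith [exp_one_lt_d9, exp_pos (1 / 2)]

namespace ProbabilityTheory

variable {v : ℝ≥0}

lemma gaussianPDFReal_le_exp_mul_gaussianPDFReal {μ₁ μ₂ ε x : ℝ}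
    (h : (μ₁ - μ₂) * (x - μ₁) ≤ ε * v - (μ₁ - μ₂) ^ 2 / 2) :
    gaussianPDFReal μ₁ v x ≤ exp ε * gaussianPDFReal μ₂ v x := by
  rcases eq_or_ne v 0 with rfl | hv
  · simp
  rw [gaussianPDFReal, gaussianPDFReal, mul_left_comm, ← exp_add]
  gcongr
  -- `(x - μ₂)² - (x - μ₁)² = 2 (μ₁ - μ₂)(x - μ₁) + (μ₁ - μ₂)²`
  rw [← sub_le_iff_le_add, div_sub_div_same, div_le_iff₀ (by positivity)]
  nlinarith

lemma gaussianPDFReal_le_gaussianPDFReal_self (μ : ℝ) (v : ℝ≥0) (x : ℝ) :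
    gaussianPDFReal μ v x ≤ gaussianPDFReal μ v μ := by
  have : -(x - μ) ^ 2 / (2 * v) ≤ 0 :=
    div_nonpos_of_nonpos_of_nonneg (neg_nonpos.mpr (sq_nonneg _)) (by positivity)
  simp only [gaussianPDFReal, sub_self]
  exact mul_le_mul_of_nonneg_left (exp_le_exp.mpr (by simpa using this)) (by positivity)

lemma hasDerivAt_gaussianPDFReal (μ : ℝ) (v : ℝ≥0) (x : ℝ) :
    HasDerivAt (gaussianPDFReal μ v) (-(x - μ) / v * gaussianPDFReal μ v x) x := by
  have hexp : HasDerivAt (fun y ↦ -(y - μ) ^ 2 / (2 * v)) (-(2 * (x - μ)) / (2 * v)) x := by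
    simpa using (((hasDerivAt_id x).sub_const μ).pow 2).neg.div_const (2 * (v : ℝ))
  refine (hexp.exp.const_mul (√(2 * π * v))⁻¹).congr_deriv ?_
  rw [gaussianPDFReal]
  ring

lemma tendsto_gaussianPDFReal_atTop (μ : ℝ) (v : ℝ≥0) :
    Tendsto (gaussianPDFReal μ v) atTop (𝓝 0) := by
  rcases eq_or_ne v 0 with rfl | hv
  · rw [gaussianPDFReal_zero_var]
    exact tendsto_const_nhds
  have hv0 : (0 : ℝ) < 2 * v := by positivity
  have hsq : Tendsto (fun y : ℝ ↦ -(y - μ) ^ 2 / (2 * v)) atTop atBot :=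
    (tendsto_neg_atTop_atBot.comp ((tendsto_pow_atTop two_ne_zero).comp
      (tendsto_atTop_add_const_right _ (-μ) tendsto_id))).atBot_div_const hv0
  simpa [gaussianPDFReal_def] using (tendsto_exp_atBot.comp hsq).const_mul (√(2 * π * v))⁻¹

lemma gaussianReal_Ioi_le_div_mul_gaussianPDFReal (hv : v ≠ 0) {c : ℝ} (hc : 0 < c) :
    gaussianReal 0 v (Ioi c) ≤ ENNReal.ofReal (v / c * gaussianPDFReal 0 v c) := by
  have hderiv : ∀ x ∈ Ici c, HasDerivAt (fun y ↦ -(v : ℝ) * gaussianPDFReal 0 v y)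
      (x * gaussianPDFReal 0 v x) x := fun x _ ↦
    ((hasDerivAt_gaussianPDFReal 0 v x).const_mul (-(v : ℝ))).congr_deriv
      (by field_simp; rw [sub_zero])
  have hpos : ∀ x ∈ Ioi c, 0 ≤ x * gaussianPDFReal 0 v x := fun x hx ↦
    mul_nonneg (hc.trans hx).le (gaussianPDFReal_nonneg _ _ _)
  have htend : Tendsto (fun y ↦ -(v : ℝ) * gaussianPDFReal 0 v y) atTop (𝓝 0) := by
    simpa using (tendsto_gaussianPDFReal_atTop 0 v).const_mul (-(v : ℝ))
  rw [gaussianReal_apply_eq_integral _ hv]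
  refine ENNReal.ofReal_le_ofReal ?_
  calc ∫ x in Ioi c, gaussianPDFReal 0 v x
      ≤ ∫ x in Ioi c, c⁻¹ * (x * gaussianPDFReal 0 v x) := by
        refine setIntegral_mono_on (integrable_gaussianPDFReal 0 v).integrableOn
          ((integrableOn_Ioi_deriv_of_nonneg' hderiv hpos htend).const_mul _)
          measurableSet_Ioi fun x hx ↦ ?_
        rw [← mul_assoc, ← div_eq_inv_mul]
        exact le_mul_of_one_le_left (gaussianPDFReal_nonneg _ _ _)
          ((one_le_div hc).mpr (le_of_lt hx))
    _ = v / c * gaussianPDFReal 0 v c := by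
        rw [integral_const_mul, integral_Ioi_of_hasDerivAt_of_nonneg' hderiv hpos htend]
        ring

lemma gaussianReal_map_mul_sub (μ c : ℝ) (v : ℝ≥0) :
    (gaussianReal μ v).map (fun x ↦ c * (x - μ)) = gaussianReal 0 (⟨c ^ 2, sq_nonneg c⟩ * v) := by
  have h := gaussianReal_map_const_mul (μ := μ - μ) (v := v) c
  rw [← gaussianReal_map_sub_const, Measure.map_map (by fun_prop) (by fun_prop), sub_self,
    mul_zero] at h
  exact h

lemma gaussianReal_le_exp_mul_add (hv : v ≠ 0) (μ₁ μ₂ ε : ℝ) (S : Set ℝ) :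
    gaussianReal μ₁ v S ≤ ENNReal.ofReal (exp ε) * gaussianReal μ₂ v S +
      gaussianReal 0 (⟨(μ₁ - μ₂) ^ 2, sq_nonneg _⟩ * v) (Ioi (ε * v - (μ₁ - μ₂) ^ 2 / 2)) := by
  set B := (fun x ↦ (μ₁ - μ₂) * (x - μ₁)) ⁻¹' Ioi (ε * v - (μ₁ - μ₂) ^ 2 / 2)
  have hB : MeasurableSet B := measurableSet_Ioi.preimage (by fun_prop)
  have hBmass : gaussianReal μ₁ v B =
      gaussianReal 0 (⟨(μ₁ - μ₂) ^ 2, sq_nonneg _⟩ * v) (Ioi (ε * v - (μ₁ - μ₂) ^ 2 / 2)) := by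
    rw [← gaussianReal_map_mul_sub μ₁ (μ₁ - μ₂) v,
      Measure.map_apply (by fun_prop) measurableSet_Ioi]
  rw [← hBmass]
  refine Measure.apply_le_mul_add_of_restrict_compl_le ?_ S
  rw [gaussianReal_of_var_ne_zero _ hv, gaussianReal_of_var_ne_zero _ hv]
  refine Measure.restrict_compl_withDensity_le_smul hB (measurable_gaussianPDF _ _) fun x hx ↦ ?_
  rw [gaussianPDF, gaussianPDF, ← ENNReal.ofReal_mul (exp_nonneg ε)]
  exact ENNReal.ofReal_le_ofReal (gaussianPDFReal_le_exp_mul_gaussianPDFReal (not_lt.mp hx))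

lemma gaussianReal_Ioi_eq_gaussianReal_one_Ioi {w : ℝ≥0} (hw : w ≠ 0) (c : ℝ) :
    gaussianReal 0 w (Ioi c) = gaussianReal 0 1 (Ioi (c / √w)) := by
  have hsqrt : (0 : ℝ) < √w := by positivity
  have h := gaussianReal_map_const_mul (μ := 0) (v := 1) √w
  rw [mul_zero, mul_one] at h
  have hw' : NNReal.mk (√w ^ 2) (sq_nonneg _) = w := NNReal.eq (Real.sq_sqrt w.2)
  rw [hw'] at h
  rw [← h, Measure.map_apply (by fun_prop) measurableSet_Ioi]
  congr 1
  ext x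
  simp [div_lt_iff₀' hsqrt]

lemma gaussianReal_Ioi_zero_le_half (v : ℝ≥0) : gaussianReal 0 v (Ioi 0) ≤ 2⁻¹ := by
  have hsymm : gaussianReal 0 v (Iio 0) = gaussianReal 0 v (Ioi 0) := by
    conv_lhs => rw [← neg_zero, ← gaussianReal_map_neg]
    rw [Measure.map_apply measurable_neg measurableSet_Iio]
    simp
  have hdisj : Disjoint (Iio (0 : ℝ)) (Ioi 0) := Iio_disjoint_Ioi_of_le le_rfl
  have hsum : gaussianReal 0 v (Ioi 0) + gaussianReal 0 v (Ioi 0) ≤ 1 := by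
    nth_rewrite 1 [← hsymm]
    rw [← measure_union hdisj measurableSet_Ioi]
    exact prob_le_one
  rw [ENNReal.le_inv_iff_mul_le, mul_two]
  exact hsum

lemma gaussianReal_Ioc_le (hv : v ≠ 0) (μ a b : ℝ) :
    gaussianReal μ v (Ioc a b) ≤ ENNReal.ofReal ((b - a) * gaussianPDFReal μ v μ) := by
  rw [gaussianReal_apply _ hv]
  calc ∫⁻ x in Ioc a b, gaussianPDF μ v x
      ≤ ∫⁻ _ in Ioc a b, ENNReal.ofReal (gaussianPDFReal μ v μ) :=
        setLIntegral_mono measurable_const fun x _ ↦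
          ENNReal.ofReal_le_ofReal (gaussianPDFReal_le_gaussianPDFReal_self μ v x)
    _ = ENNReal.ofReal ((b - a) * gaussianPDFReal μ v μ) := by
        rw [setLIntegral_const, Real.volume_Ioc, mul_comm,
          ENNReal.ofReal_mul' (gaussianPDFReal_nonneg _ _ _)]

lemma gaussianReal_Ioi_le_half_sub (hv : v ≠ 0) {a : ℝ} (ha : a ≤ 0) :
    gaussianReal 0 v (Ioi a) ≤ ENNReal.ofReal (2⁻¹ - a * gaussianPDFReal 0 v 0) := by
  have hhalf : gaussianReal 0 v (Ioi 0) ≤ ENNReal.ofReal 2⁻¹ := by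
    rw [ENNReal.ofReal_inv_of_pos two_pos, ENNReal.ofReal_ofNat]
    exact gaussianReal_Ioi_zero_le_half v
  calc gaussianReal 0 v (Ioi a) = gaussianReal 0 v (Ioc a 0 ∪ Ioi 0) := by
        rw [Ioc_union_Ioi_eq_Ioi ha]
    _ ≤ gaussianReal 0 v (Ioc a 0) + gaussianReal 0 v (Ioi 0) := measure_union_le _ _
    _ ≤ ENNReal.ofReal ((0 - a) * gaussianPDFReal 0 v 0) + ENNReal.ofReal 2⁻¹ :=
        add_le_add (gaussianReal_Ioc_le hv 0 a 0) hhalf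
    _ = ENNReal.ofReal (2⁻¹ - a * gaussianPDFReal 0 v 0) := by
        rw [← ENNReal.ofReal_add (mul_nonneg (by linarith) (gaussianPDFReal_nonneg _ _ _))
          (by norm_num)]
        ring_nf

lemma gaussianPDFReal_zero_one_le (x : ℝ) : gaussianPDFReal 0 1 x ≤ 0.4 * exp (-(x ^ 2 / 2)) := by
  have hsqrt : 2.5 ≤ √(2 * π) := Real.le_sqrt_of_sq_le (by nlinarith [pi_gt_d2])
  simp only [gaussianPDFReal, NNReal.coe_one, mul_one, sub_zero, neg_div]
  gcongr
  rw [inv_le_comm₀ (by positivity) (by norm_num)]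
  linarith

lemma gaussianReal_one_Ioi_sub_inv_le_of_le {u : ℝ} (hu : 1.09 ≤ u) :
    gaussianReal 0 1 (Ioi (u - (2 * u)⁻¹)) ≤ ENNReal.ofReal (1.25 * exp (-(u ^ 2 / 2))) := by
  set a := u - (2 * u)⁻¹
  have hinv : 2 * u * (2 * u)⁻¹ = 1 := mul_inv_cancel₀ (by positivity)
  have ha : 0.63 ≤ a := by
    have : (2 * u)⁻¹ ≤ (2 * 1.09)⁻¹ := inv_anti₀ (by norm_num) (by linarith)
    have : (2 * 1.09 : ℝ)⁻¹ ≤ 0.46 := by norm_num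
    linarith
  -- `a² = u² - 1 + (2u)⁻²`
  have hexp : exp (-(a ^ 2 / 2)) ≤ 1.65 * exp (-(u ^ 2 / 2)) := by
    calc exp (-(a ^ 2 / 2)) ≤ exp (1 / 2 + -(u ^ 2 / 2)) := exp_le_exp.mpr (by nlinarith)
      _ ≤ 1.65 * exp (-(u ^ 2 / 2)) := by rw [exp_add]; gcongr; exact exp_one_div_two_le
  refine (gaussianReal_Ioi_le_div_mul_gaussianPDFReal one_ne_zero (by linarith)).trans
    (ENNReal.ofReal_le_ofReal ?_)
  rw [NNReal.coe_one]
  calc 1 / a * gaussianPDFReal 0 1 a ≤ 1 / a * (0.4 * (1.65 * exp (-(u ^ 2 / 2)))) := by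
        gcongr
        exact (gaussianPDFReal_zero_one_le a).trans (by gcongr)
    _ ≤ 1 / 0.63 * (0.4 * (1.65 * exp (-(u ^ 2 / 2)))) := by gcongr
    _ ≤ 1.25 * exp (-(u ^ 2 / 2)) := by nlinarith [exp_pos (-(u ^ 2 / 2))]

lemma gaussianReal_one_Ioi_sub_inv_le {u : ℝ} (hu : 0 < u) (hδ : 1.25 * exp (-(u ^ 2 / 2)) < 1) :
    gaussianReal 0 1 (Ioi (u - (2 * u)⁻¹)) ≤ ENNReal.ofReal (1.25 * exp (-(u ^ 2 / 2))) := by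
  have hE : 1 - u ^ 2 / 2 ≤ exp (-(u ^ 2 / 2)) := by linarith [add_one_le_exp (-(u ^ 2 / 2))]
  have hinv : 2 * u * (2 * u)⁻¹ = 1 := mul_inv_cancel₀ (by positivity)
  by_cases hδhalf : 1.25 * exp (-(u ^ 2 / 2)) < 1 / 2
  · exact gaussianReal_one_Ioi_sub_inv_le_of_le (by nlinarith)
  rcases le_or_gt 0 (u - (2 * u)⁻¹) with ha | ha
  · calc gaussianReal 0 1 (Ioi (u - (2 * u)⁻¹)) ≤ gaussianReal 0 1 (Ioi 0) :=
          measure_mono (Ioi_subset_Ioi ha)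
      _ ≤ 2⁻¹ := gaussianReal_Ioi_zero_le_half 1
      _ ≤ ENNReal.ofReal (1.25 * exp (-(u ^ 2 / 2))) := by
          rw [← ENNReal.ofReal_ofNat, ← ENNReal.ofReal_inv_of_pos two_pos]
          exact ENNReal.ofReal_le_ofReal (by linarith)
  · have hu2 : u ^ 2 < 2⁻¹ := by nlinarith
    have hu : 0.63 ≤ u := by nlinarith
    have hinv_le : (2 * u)⁻¹ ≤ 0.8 :=
      (inv_anti₀ (by norm_num) (by linarith)).trans (by norm_num : (2 * 0.63 : ℝ)⁻¹ ≤ 0.8)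
    have hpdf : gaussianPDFReal 0 1 0 ≤ 0.4 := by simpa using gaussianPDFReal_zero_one_le 0
    refine (gaussianReal_Ioi_le_half_sub one_ne_zero ha.le).trans (ENNReal.ofReal_le_ofReal ?_)
    nlinarith [gaussianPDFReal_nonneg 0 1 0]

lemma gaussianReal_le_exp_mul_add_gaussianReal_one_Ioi {μ₁ μ₂ Sf ε σ : ℝ}
    (hΔ : |μ₁ - μ₂| ≤ Sf) (hε : 0 ≤ ε) (hσ : 0 < σ) (S : Set ℝ) :
    gaussianReal μ₁ (σ ^ 2 * Sf ^ 2).toNNReal S ≤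
      ENNReal.ofReal (exp ε) * gaussianReal μ₂ (σ ^ 2 * Sf ^ 2).toNNReal S +
        gaussianReal 0 1 (Ioi (ε * σ - (2 * σ)⁻¹)) := by
  rcases eq_or_ne μ₁ μ₂ with rfl | hne
  · exact le_add_right (le_mul_of_one_le_left zero_le (ENNReal.one_le_ofReal.mpr (one_le_exp hε)))
  set d := |μ₁ - μ₂|
  have hd : 0 < d := abs_pos.mpr (sub_ne_zero.mpr hne)
  have hd2 : (μ₁ - μ₂) ^ 2 = d ^ 2 := (sq_abs _).symm
  have hSf : 0 < Sf := hd.trans_le hΔ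
  set v := (σ ^ 2 * Sf ^ 2).toNNReal
  have hv : (v : ℝ) = (σ * Sf) ^ 2 := by
    rw [Real.coe_toNNReal _ (by positivity)]; ring
  have hv0 : v ≠ 0 := by rw [← NNReal.coe_ne_zero, hv]; positivity
  set w : ℝ≥0 := ⟨(μ₁ - μ₂) ^ 2, sq_nonneg _⟩ * v
  have hsqrt : √w = d * (σ * Sf) := by
    have hw : (w : ℝ) = (μ₁ - μ₂) ^ 2 * v := rfl
    rw [hw, hv, hd2, ← mul_pow, Real.sqrt_sq (by positivity)]
  have hw0 : w ≠ 0 := by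
    have : 0 < √w := by rw [hsqrt]; positivity
    exact (NNReal.coe_pos.mp (Real.sqrt_pos.mp this)).ne'
  refine (gaussianReal_le_exp_mul_add hv0 μ₁ μ₂ ε S).trans (add_le_add le_rfl ?_)
  rw [gaussianReal_Ioi_eq_gaussianReal_one_Ioi hw0]
  refine measure_mono (Ioi_subset_Ioi ?_)
  have hlhs : (ε * σ - (2 * σ)⁻¹) * (d * (σ * Sf)) = ε * σ ^ 2 * Sf * d - d * Sf / 2 := by
    field_simp
  rw [hsqrt, le_div_iff₀ (by positivity), hv, hlhs, hd2]
  nlinarith [mul_nonneg (mul_nonneg (mul_nonneg hε (sq_nonneg σ)) hSf.le) (sub_nonneg.mpr hΔ),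
    mul_nonneg hd.le (sub_nonneg.mpr hΔ)]

end ProbabilityTheory

/-- The Gaussian mechanism `F(x) = f(x) + N(0, σ² S_f²)`, where `S_f` bounds
the sensitivity of `f` (`|f(D) - f(D')| ≤ S_f` for all adjacent `D, D'`),
satisfies `(ε, δ)`-differential privacy whenever
`σ ≥ √(2 ln(1.25/δ)) / ε` with `ε ∈ (0, 1)`:
for all adjacent `D, D'` and measurable `S`,
`Pr[F(D) ∈ S] ≤ e^ε Pr[F(D') ∈ S] + δ`. -/
theorem gaussian_mechanism_DP
    {X : Type*} (adj : X → X → Prop) (f : X → ℝ)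
    (Sf ε δ σ : ℝ)
    (hsens : ∀ D D', adj D D' → |f D - f D'| ≤ Sf)
    (hε : 0 < ε) (hε1 : ε < 1) (hδ : 0 < δ)
    (hσ : Real.sqrt (2 * Real.log (1.25 / δ)) / ε ≤ σ) :
    ∀ D D', adj D D' → ∀ S : Set ℝ, MeasurableSet S →
      gaussianReal (f D) ((σ ^ 2 * Sf ^ 2).toNNReal) S ≤
        ENNReal.ofReal (Real.exp ε) *
          gaussianReal (f D') ((σ ^ 2 * Sf ^ 2).toNNReal) S + ENNReal.ofReal δ := by
  intro D D' hadj S _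
  rcases le_or_gt 1 δ with hδ1 | hδ1
  · exact prob_le_one.trans ((ENNReal.one_le_ofReal.mpr hδ1).trans le_add_self)
  set u := √(2 * log (1.25 / δ))
  have hlog : 0 < log (1.25 / δ) := log_pos (by rw [lt_div_iff₀ hδ]; linarith)
  have hu : 0 < u := sqrt_pos.mpr (by positivity)
  have hδu : 1.25 * exp (-(u ^ 2 / 2)) = δ := by
    rw [sq_sqrt (by positivity), mul_div_cancel_left₀ _ two_ne_zero, exp_neg,
      exp_log (by positivity)]
    field_simp
  have huεσ : u ≤ ε * σ := by rw [div_le_iff₀ hε] at hσ; linarith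
  have hσ0 : 0 < σ := pos_of_mul_pos_right (hu.trans_le huεσ) hε.le
  have hthreshold : u - (2 * u)⁻¹ ≤ ε * σ - (2 * σ)⁻¹ := by
    have : (2 * σ)⁻¹ ≤ (2 * u)⁻¹ := inv_anti₀ (by positivity) (by nlinarith)
    linarith
  calc gaussianReal (f D) ((σ ^ 2 * Sf ^ 2).toNNReal) S
      ≤ ENNReal.ofReal (exp ε) * gaussianReal (f D') ((σ ^ 2 * Sf ^ 2).toNNReal) S +
          gaussianReal 0 1 (Ioi (ε * σ - (2 * σ)⁻¹)) :=
        gaussianReal_le_exp_mul_add_gaussianReal_one_Ioi (hsens D D' hadj) hε.le hσ0 S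
    _ ≤ _ := by
        gcongr
        refine (measure_mono (Ioi_subset_Ioi hthreshold)).trans ?_
        rw [← hδu]
        exact gaussianReal_one_Ioi_sub_inv_le hu (hδu ▸ hδ1)
end
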